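/- arXiv:1901.07516 — 2 statements merged into one kernel-verified Lean document; each statement's English description precedes it below -/
import Mathlib

section
/- Let H be a real Hilbert space, V_1,…,V_N closed subspaces of H, and suppose κ ≥ 2 is a constant such that d(x, V_I ∩ V_J) ≤ κ·max(d(x, V_I), d(x, V_J)) for all I, J ⊆ {1,…,N} and all x ∈ H. Let η ∈ (0,1] and γ > 0, set ε* := (1/2)·κ^{−N}, β* := (1 − η(2−η)ε*²)^{1/2}, and define constants C_1 := (2−η)^γ/(1−(1−η)^γ) and C_{ℓ+1} := C_ℓ + (C_ℓ + (2−η)^γ)/(1−β*^γ) for 1 ≤ ℓ < N. Then for every ℓ ∈ {1,…,N} the following holds: for all integers q ≥ p ≥ 0, if the control sequence (i_k)_{p≤k≤q} takes at most ℓ distinct values in {1,…,N} and λ_k ∈ [η, 2−η] for p ≤ k ≤ q, then any trajectory defined by x_{k+1} := P_{i_k,λ_k}(x_k) for k = p,…,q satisfies ∑_{k=p}^{q} ‖x_{k+1} − x_k‖^γ ≤ C_ℓ·‖x_p‖^γ. -/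
/-!
Induction on the number `ℓ` of distinct controls. For `ℓ = 1` the residual `d(x_k, V)` is
multiplied by `|1 - λ_k| ≤ 1 - η` at each step, and the step lengths `|λ_k| d(x_k, V)` form a
geometric series.

For `ℓ + 1` controls with set `S`, the distances `D_k = d(x_k, V_S)` are nonincreasing, each step
is at most `(2 - η) D_k`, and `D` drops by the factor `β` inside every window that uses all of
`S`: either some iterate is `ε D_k`-far from its next subspace, and the identity
`‖P_{V,λ} x - z‖² = ‖x - z‖² - λ(2 - λ) d(x, V)²` at the nearest point `z` of `V_S` gives the
drop, or all are that close and `κ`-regularity, applied once per new control, gives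
`D ≤ κ^(|S|-1) ε D_p ≤ β D_p`. Cutting at the first drop `t`, the stretch before `t` uses at most
`ℓ` controls and costs `C_ℓ D_p^γ`, step `t` costs `(2 - η)^γ D_p^γ`, and the rest, which starts
from `D_{t+1} ≤ β D_p`, is handled by induction on the length. The recursion defining `C_{ℓ+1}` is
exactly what makes these three pieces add up to `C_{ℓ+1} D_p^γ`.
-/

open Metric

noncomputable def relaxProj {H : Type*} [NormedAddCommGroup H] [InnerProductSpace ℝ H]
    (V : Submodule ℝ H) [Submodule.HasOrthogonalProjection V] (l : ℝ) (x : H) : H :=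
  (1 - l) • x + l • (Submodule.orthogonalProjectionOnto V x : H)

open Finset Submodule RealInnerProductSpace

theorem infDist_le_norm_sub {E : Type*} [SeminormedAddCommGroup E] {x z : E} {s : Set E}
    (hz : z ∈ s) : infDist x s ≤ ‖x - z‖ := by
  simpa only [dist_eq_norm] using infDist_le_dist_of_mem hz

section RelaxedProjection

variable {H : Type*} [NormedAddCommGroup H] [InnerProductSpace ℝ H]
  (V : Submodule ℝ H) [V.HasOrthogonalProjection]

theorem infDist_eq_norm_sub_starProjection (x : H) :
    infDist x V = ‖x - V.starProjection x‖ := by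
  apply le_antisymm
  · exact infDist_le_norm_sub (V.starProjection_apply_mem x)
  · refine (le_infDist ⟨0, V.zero_mem⟩).2 fun y hy => ?_
    rw [dist_eq_norm, starProjection_minimal]
    exact ciInf_le ⟨0, by rintro _ ⟨w, rfl⟩; exact norm_nonneg _⟩ (⟨y, hy⟩ : V)

theorem relaxProj_eq_sub_smul (l : ℝ) (x : H) :
    relaxProj V l x = x - l • (x - V.starProjection x) := by
  simp only [relaxProj, coe_orthogonalProjectionOnto_apply, sub_smul, smul_sub, one_smul]
  abel

theorem norm_relaxProj_sub_self (l : ℝ) (x : H) :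
    ‖relaxProj V l x - x‖ = |l| * infDist x V := by
  rw [relaxProj_eq_sub_smul, sub_sub_cancel_left, norm_neg, norm_smul, Real.norm_eq_abs,
    infDist_eq_norm_sub_starProjection]

theorem starProjection_relaxProj (l : ℝ) (x : H) :
    V.starProjection (relaxProj V l x) = V.starProjection x := by
  simp only [relaxProj, coe_orthogonalProjectionOnto_apply, map_add, map_smul,
    starProjection_eq_self_iff.2 (V.starProjection_apply_mem x), ← add_smul, sub_add_cancel,
    one_smul]

theorem infDist_relaxProj (l : ℝ) (x : H) :
    infDist (relaxProj V l x) V = |1 - l| * infDist x V := by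
  rw [infDist_eq_norm_sub_starProjection, infDist_eq_norm_sub_starProjection,
    starProjection_relaxProj, ← Real.norm_eq_abs, ← norm_smul]
  congr 1
  rw [relaxProj_eq_sub_smul, sub_smul, one_smul]
  abel

theorem norm_relaxProj_sub_sq (l : ℝ) (x : H) {z : H} (hz : z ∈ V) :
    ‖relaxProj V l x - z‖ ^ 2 = ‖x - z‖ ^ 2 - l * (2 - l) * infDist x V ^ 2 := by
  have hperp : ∀ c : ℝ, ⟪c • (x - V.starProjection x), V.starProjection x - z⟫ = 0 := fun c => by
    rw [real_inner_smul_left, starProjection_inner_eq_zero x _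
      (V.sub_mem (V.starProjection_apply_mem x) hz), mul_zero]
  have h1 : relaxProj V l x - z
      = (1 - l) • (x - V.starProjection x) + (V.starProjection x - z) := by
    rw [relaxProj_eq_sub_smul, sub_smul, one_smul]; abel
  have h2 : x - z = (1 : ℝ) • (x - V.starProjection x) + (V.starProjection x - z) := by
    rw [one_smul]; abel
  rw [h1, h2, norm_add_sq_real, norm_add_sq_real, hperp, hperp, norm_smul, norm_smul,
    infDist_eq_norm_sub_starProjection, Real.norm_eq_abs, Real.norm_eq_abs, mul_pow, mul_pow,
    sq_abs, sq_abs]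
  ring

theorem norm_relaxProj_sub_le {l : ℝ} (hl : l ∈ Set.Icc (0 : ℝ) 2) (x : H) {z : H} (hz : z ∈ V) :
    ‖relaxProj V l x - z‖ ≤ ‖x - z‖ := by
  have : 0 ≤ l * (2 - l) * infDist x V ^ 2 :=
    mul_nonneg (mul_nonneg hl.1 (sub_nonneg.2 hl.2)) (sq_nonneg _)
  refine (pow_le_pow_iff_left₀ (norm_nonneg _) (norm_nonneg _) two_ne_zero).1 ?_
  rw [norm_relaxProj_sub_sq V l x hz]
  linarith

theorem infDist_relaxProj_le {l : ℝ} (hl : l ∈ Set.Icc (0 : ℝ) 2) (x : H) {s : Set H}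
    (hs : s ⊆ V) : infDist (relaxProj V l x) s ≤ infDist x s := by
  rcases s.eq_empty_or_nonempty with rfl | hne
  · simp
  refine (le_infDist hne).2 fun z hz => ?_
  rw [dist_eq_norm]
  exact (infDist_le_norm_sub hz).trans (norm_relaxProj_sub_le V hl x (hs hz))

theorem norm_relaxProj_sub_self_le (l : ℝ) (x : H) {s : Set H} (hs : s ⊆ V) (hne : s.Nonempty) :
    ‖relaxProj V l x - x‖ ≤ |l| * infDist x s := by
  rw [norm_relaxProj_sub_self]
  exact mul_le_mul_of_nonneg_left (infDist_le_infDist_of_subset hs hne) (abs_nonneg l)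

theorem infDist_relaxProj_le_mul {W : Submodule ℝ H} [W.HasOrthogonalProjection] (hWV : W ≤ V)
    {η ε β l : ℝ} (hη : 0 ≤ η) (hε : 0 ≤ ε) (hβ0 : 0 ≤ β)
    (hβ : 1 - η * (2 - η) * ε ^ 2 ≤ β ^ 2) (hl : l ∈ Set.Icc η (2 - η)) {x : H}
    (hx : ε * infDist x W ≤ infDist x V) :
    infDist (relaxProj V l x) W ≤ β * infDist x W := by
  obtain ⟨hl1, hl2⟩ := hl
  have hz := W.starProjection_apply_mem x
  have hD := infDist_eq_norm_sub_starProjection W x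
  have hlη : η * (2 - η) ≤ l * (2 - l) := by nlinarith
  have hsq : (ε * infDist x W) ^ 2 ≤ infDist x V ^ 2 :=
    pow_le_pow_left₀ (mul_nonneg hε infDist_nonneg) hx 2
  have key : ‖relaxProj V l x - W.starProjection x‖ ^ 2 ≤ (β * infDist x W) ^ 2 := by
    rw [norm_relaxProj_sub_sq V l x (hWV hz), ← hD, mul_pow]
    have : 0 ≤ η * (2 - η) := by nlinarith
    nlinarith [mul_le_mul_of_nonneg_left hsq this,
      mul_le_mul_of_nonneg_right hlη (sq_nonneg (infDist x V)), sq_nonneg (infDist x W)]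
  calc infDist (relaxProj V l x) W ≤ ‖relaxProj V l x - W.starProjection x‖ :=
        infDist_le_norm_sub hz
    _ ≤ β * infDist x W :=
        (pow_le_pow_iff_left₀ (norm_nonneg _) (mul_nonneg hβ0 infDist_nonneg) two_ne_zero).1 key

end RelaxedProjection

theorem sum_Ico_le_div_one_sub_of_le_mul {d : ℕ → ℝ} {ρ : ℝ} (hρ : ρ < 1) (hd0 : ∀ k, 0 ≤ d k)
    {p n : ℕ} (hd : ∀ k ∈ Ico p n, d (k + 1) ≤ ρ * d k) :
    ∑ k ∈ Ico p n, d k ≤ d p / (1 - ρ) := by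
  have hρ' : 0 < 1 - ρ := by linarith
  induction hlen : n - p generalizing p with
  | zero =>
    rw [Ico_eq_empty_of_le (by omega), sum_empty]
    exact div_nonneg (hd0 p) hρ'.le
  | succ m ih =>
    have hpn : p < n := by omega
    have htail := ih (fun k hk => hd k (Ico_subset_Ico_left p.le_succ hk)) (by omega)
    have hp := hd p (left_mem_Ico.2 hpn)
    rw [sum_eq_sum_Ico_succ_bot hpn]
    calc d p + ∑ k ∈ Ico (p + 1) n, d k ≤ d p + ρ * d p / (1 - ρ) := by
          gcongr
          exact htail.trans (div_le_div_of_nonneg_right hp hρ'.le)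
      _ = d p / (1 - ρ) := by field_simp; ring


theorem add_add_mul_le_of_eq_add_div {a b c c' : ℝ} (hc : 0 ≤ c) (ha : 0 ≤ a) (hb : b < 1)
    (h : c' = c + (c + a) / (1 - b)) : 0 ≤ c' ∧ c + a + c' * b ≤ c' := by
  have hb' : 0 < 1 - b := by linarith
  have hfrac : 0 ≤ (c + a) / (1 - b) := div_nonneg (by linarith) hb'.le
  have hmul : c' * (1 - b) = c * (1 - b) + (c + a) := by
    rw [h, add_mul, div_mul_cancel₀ _ hb'.ne']
  constructor
  · linarith
  · nlinarith

theorem pow_mul_half_inv_pow_le {κ : ℝ} (hκ : 2 ≤ κ) {l N : ℕ} (hlN : l < N) :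
    κ ^ l * (1 / 2 * (κ ^ N)⁻¹) ≤ 1 / 4 := by
  have hκl : 0 < κ ^ l := by positivity
  have hN : 2 * κ ^ l ≤ κ ^ N :=
    calc 2 * κ ^ l ≤ κ ^ (l + 1) := by rw [pow_succ]; nlinarith
      _ ≤ κ ^ N := pow_le_pow_right₀ (by linarith) hlN
  rw [← div_eq_mul_inv, ← mul_div_assoc, div_le_iff₀ (by positivity)]
  linarith

theorem sqrt_one_sub_mul_sq_bounds {η ε : ℝ} (hη : η ∈ Set.Ioc 0 1) (hε : ε ∈ Set.Ioc 0 (1 / 4)) :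
    √(1 - η * (2 - η) * ε ^ 2) ^ 2 = 1 - η * (2 - η) * ε ^ 2 ∧
      1 / 4 ≤ √(1 - η * (2 - η) * ε ^ 2) ∧ √(1 - η * (2 - η) * ε ^ 2) < 1 := by
  obtain ⟨hη0, hη1⟩ := hη
  obtain ⟨hε0, hε1⟩ := hε
  have hpos : 0 < η * (2 - η) * ε ^ 2 := mul_pos (mul_pos hη0 (by linarith)) (pow_pos hε0 2)
  have hsmall : η * (2 - η) * ε ^ 2 ≤ 1 / 16 := by
    have := mul_le_mul (by nlinarith : η * (2 - η) ≤ 1) (by nlinarith : ε ^ 2 ≤ 1 / 16)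
      (sq_nonneg ε) zero_le_one
    linarith
  have hsq := Real.sq_sqrt (by linarith : 0 ≤ 1 - η * (2 - η) * ε ^ 2)
  have h0 := Real.sqrt_nonneg (1 - η * (2 - η) * ε ^ 2)
  exact ⟨hsq, by nlinarith, by nlinarith⟩

section Regularity

variable {H : Type*} [NormedAddCommGroup H] [InnerProductSpace ℝ H] {ι : Type*}

def LinearlyRegular (V : ι → Submodule ℝ H) (κ : ℝ) : Prop :=
  ∀ (I J : Finset ι) (x : H),
    infDist x ((((⨅ i ∈ I, V i) ⊓ ⨅ j ∈ J, V j) : Submodule ℝ H) : Set H) ≤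
      κ * max (infDist x ((⨅ i ∈ I, V i : Submodule ℝ H) : Set H))
              (infDist x ((⨅ j ∈ J, V j : Submodule ℝ H) : Set H))

variable {V : ι → Submodule ℝ H} [DecidableEq ι] {κ : ℝ}

theorem LinearlyRegular.infDist_biInf_insert_le (hreg : LinearlyRegular V κ) (hκ : 1 ≤ κ)
    {T : Finset ι} (hT : T.Nonempty) {j : ι} {x : H} {δ : ℝ}
    (hxT : infDist x (⨅ k ∈ T, V k : Submodule ℝ H) ≤ κ ^ (#T - 1) * δ)
    (hxj : infDist x (V j) ≤ δ) :
    infDist x (⨅ k ∈ insert j T, V k : Submodule ℝ H) ≤ κ ^ (#(insert j T) - 1) * δ := by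
  by_cases hjT : j ∈ T
  · rwa [insert_eq_of_mem hjT]
  have hδ : 0 ≤ δ := infDist_nonneg.trans hxj
  have hpow : κ ^ #T = κ * κ ^ (#T - 1) := by
    rw [← pow_succ', Nat.sub_add_cancel hT.card_pos]
  have hxj' : infDist x (V j) ≤ κ ^ (#T - 1) * δ :=
    hxj.trans (le_mul_of_one_le_left hδ (one_le_pow₀ hκ))
  have := hreg {j} T x
  rw [Finset.iInf_singleton] at this
  rw [Finset.iInf_insert, card_insert_of_notMem hjT, Nat.add_sub_cancel, hpow, mul_assoc]
  exact this.trans (mul_le_mul_of_nonneg_left (max_le hxj' hxT) (by linarith))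

end Regularity

section Trajectory

variable {H : Type*} [NormedAddCommGroup H] [InnerProductSpace ℝ H] {ι : Type*}
  (V : ι → Submodule ℝ H) [∀ j, (V j).HasOrthogonalProjection]

def IsRelaxedTrajectory (η : ℝ) (i : ℕ → ι) (lam : ℕ → ℝ) (x : ℕ → H) (p n : ℕ) : Prop :=
  ∀ k ∈ Ico p n, lam k ∈ Set.Icc η (2 - η) ∧ x (k + 1) = relaxProj (V (i k)) (lam k) (x k)

variable {V} {η : ℝ} {i : ℕ → ι} {lam : ℕ → ℝ} {x : ℕ → H} {p n : ℕ}

theorem IsRelaxedTrajectory.mono {p' n' : ℕ} (h : IsRelaxedTrajectory V η i lam x p n)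
    (hp : p ≤ p') (hn : n' ≤ n) : IsRelaxedTrajectory V η i lam x p' n' :=
  fun k hk => h k (Ico_subset_Ico hp hn hk)

theorem IsRelaxedTrajectory.infDist_le_of_le (htraj : IsRelaxedTrajectory V η i lam x p n)
    (hη : 0 ≤ η) {s : Set H} (hs : ∀ k ∈ Ico p n, s ⊆ V (i k)) {a b : ℕ} (hpa : p ≤ a)
    (hab : a ≤ b) (hbn : b ≤ n) :
    infDist (x b) s ≤ infDist (x a) s := by
  induction b, hab using Nat.le_induction with
  | base => rfl
  | succ b hab ih =>
    have hb : b ∈ Ico p n := mem_Ico.2 ⟨hpa.trans hab, hbn⟩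
    obtain ⟨⟨hl1, hl2⟩, hxb⟩ := htraj b hb
    rw [hxb]
    exact (infDist_relaxProj_le _ ⟨by linarith, by linarith⟩ _ (hs b hb)).trans (ih (by omega))

theorem IsRelaxedTrajectory.norm_sub_rpow_le (htraj : IsRelaxedTrajectory V η i lam x p n)
    {γ : ℝ} (hγ : 0 ≤ γ) {k : ℕ} (hk : k ∈ Ico p n) {s : Set H} (hs : s ⊆ V (i k))
    (hne : s.Nonempty) :
    ‖x (k + 1) - x k‖ ^ γ ≤ (2 - η) ^ γ * infDist (x k) s ^ γ := by
  obtain ⟨⟨hl1, hl2⟩, hxk⟩ := htraj k hk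
  rw [hxk, ← Real.mul_rpow (by linarith) infDist_nonneg]
  refine Real.rpow_le_rpow (norm_nonneg _) ?_ hγ
  exact (norm_relaxProj_sub_self_le _ _ _ hs hne).trans
    (mul_le_mul_of_nonneg_right (abs_le.2 ⟨by linarith, hl2⟩) infDist_nonneg)

theorem IsRelaxedTrajectory.norm_sub_rpow_le_infDist_start
    (htraj : IsRelaxedTrajectory V η i lam x p n) (hη : η ∈ Set.Ioc 0 1) {γ : ℝ} (hγ : 0 ≤ γ)
    {s : Set H} (hs : ∀ k ∈ Ico p n, s ⊆ V (i k)) (hne : s.Nonempty) {k : ℕ} (hk : k ∈ Ico p n) :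
    ‖x (k + 1) - x k‖ ^ γ ≤ (2 - η) ^ γ * infDist (x p) s ^ γ := by
  refine (htraj.norm_sub_rpow_le hγ hk (hs k hk) hne).trans
    (mul_le_mul_of_nonneg_left ?_ (Real.rpow_nonneg (by linarith [hη.2]) γ))
  exact Real.rpow_le_rpow infDist_nonneg
    (htraj.infDist_le_of_le hη.1.le hs le_rfl (mem_Ico.1 hk).1 (mem_Ico.1 hk).2.le) hγ

theorem IsRelaxedTrajectory.infDist_biInf_image_le [DecidableEq ι] {κ δ : ℝ}
    (hreg : LinearlyRegular V κ) (hκ : 1 ≤ κ) (hη : 0 ≤ η) {a b : ℕ}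
    (htraj : IsRelaxedTrajectory V η i lam x a b) (hab : a < b)
    (hsmall : ∀ k ∈ Ico a b, infDist (x k) (V (i k)) ≤ δ) :
    infDist (x b) (⨅ j ∈ (Ico a b).image i, V j : Submodule ℝ H) ≤
      κ ^ (#((Ico a b).image i) - 1) * δ := by
  induction b, hab using Nat.le_induction with
  | base =>
    obtain ⟨⟨hl1, hl2⟩, hxa⟩ := htraj a (by simp)
    simp only [Nat.Ico_succ_singleton, image_singleton, Finset.iInf_singleton, card_singleton,
      Nat.sub_self, pow_zero, one_mul]
    rw [hxa]
    exact (infDist_relaxProj_le _ ⟨by linarith, by linarith⟩ _ subset_rfl).trans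
      (hsmall a (by simp))
  | succ b hab ih =>
    have hb : b ∈ Ico a (b + 1) := mem_Ico.2 ⟨by omega, by omega⟩
    obtain ⟨⟨hl1, hl2⟩, hxb⟩ := htraj b hb
    have himg : (Ico a (b + 1)).image i = insert (i b) ((Ico a b).image i) := by
      rw [Nat.Ico_succ_right_eq_insert_Ico (by omega), image_insert]
    have hsub : ((⨅ j ∈ insert (i b) ((Ico a b).image i), V j : Submodule ℝ H) : Set H) ⊆
        V (i b) := SetLike.coe_subset_coe.2 (biInf_le V (mem_insert_self _ _))
    rw [himg, hxb]
    refine (infDist_relaxProj_le (V (i b)) ⟨by linarith, by linarith⟩ (x b) hsub).trans ?_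
    exact hreg.infDist_biInf_insert_le hκ ⟨i a, mem_image_of_mem i (mem_Ico.2 ⟨le_rfl, hab⟩)⟩
      (ih (htraj.mono le_rfl b.le_succ) fun k hk => hsmall k (Ico_subset_Ico_right b.le_succ hk))
      (hsmall b hb)

variable (V)

/-- The statement `P(ℓ)` for a bound `c`, over the half-open range of steps `[p, n)` and measured
from an arbitrary common point `z` of the subspaces used rather than from `0`: the induction
restarts the bound at points of intersections. -/
def StepMomentBound [DecidableEq ι] (η γ : ℝ) (l : ℕ) (c : ℝ) : Prop :=
  ∀ (i : ℕ → ι) (lam : ℕ → ℝ) (x : ℕ → H) (p n : ℕ) (z : H),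
    #((Ico p n).image i) ≤ l → IsRelaxedTrajectory V η i lam x p n →
    (∀ k ∈ Ico p n, z ∈ V (i k)) →
    ∑ k ∈ Ico p n, ‖x (k + 1) - x k‖ ^ γ ≤ c * ‖x p - z‖ ^ γ

theorem stepMomentBound_one [DecidableEq ι] {η γ : ℝ} (hη : η ∈ Set.Ioc 0 1) (hγ : 0 < γ) :
    StepMomentBound V η γ 1 ((2 - η) ^ γ / (1 - (1 - η) ^ γ)) := by
  obtain ⟨hη0, hη1⟩ := hη
  intro i lam x p n z hcard htraj hz
  have hρ : (1 - η) ^ γ < 1 := Real.rpow_lt_one (by linarith) (by linarith) hγ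
  have h2η : 0 ≤ (2 - η) ^ γ := Real.rpow_nonneg (by linarith) γ
  rcases le_or_gt n p with hnp | hpn
  · rw [Ico_eq_empty_of_le hnp, sum_empty]
    exact mul_nonneg (div_nonneg h2η (by linarith)) (Real.rpow_nonneg (norm_nonneg _) γ)
  have hi : ∀ k ∈ Ico p n, i k = i p := fun k hk =>
    card_le_one.1 hcard _ (mem_image_of_mem i hk) _ (mem_image_of_mem i (left_mem_Ico.2 hpn))
  set d : ℕ → ℝ := fun k => infDist (x k) (V (i p))
  have hstep : ∀ k ∈ Ico p n, ‖x (k + 1) - x k‖ ^ γ ≤ (2 - η) ^ γ * d k ^ γ := fun k hk =>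
    htraj.norm_sub_rpow_le hγ.le hk (by rw [hi k hk]) ⟨0, zero_mem _⟩
  have hdecay : ∀ k ∈ Ico p n, d (k + 1) ^ γ ≤ (1 - η) ^ γ * d k ^ γ := fun k hk => by
    obtain ⟨⟨hl1, hl2⟩, hxk⟩ := htraj k hk
    simp only [d, hxk, hi k hk, infDist_relaxProj]
    rw [← Real.mul_rpow (by linarith) infDist_nonneg]
    have hlam : |1 - lam k| ≤ 1 - η := abs_le.2 ⟨by linarith, by linarith⟩
    exact Real.rpow_le_rpow (mul_nonneg (abs_nonneg _) infDist_nonneg)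
      (mul_le_mul_of_nonneg_right hlam infDist_nonneg) hγ.le
  have hdp : d p ≤ ‖x p - z‖ := infDist_le_norm_sub (hz p (left_mem_Ico.2 hpn))
  calc ∑ k ∈ Ico p n, ‖x (k + 1) - x k‖ ^ γ ≤ ∑ k ∈ Ico p n, (2 - η) ^ γ * d k ^ γ :=
        sum_le_sum hstep
    _ ≤ (2 - η) ^ γ * (d p ^ γ / (1 - (1 - η) ^ γ)) := by
        rw [← mul_sum]
        gcongr
        exact sum_Ico_le_div_one_sub_of_le_mul (d := fun k => d k ^ γ) hρ
          (fun k => Real.rpow_nonneg infDist_nonneg γ) hdecay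
    _ ≤ (2 - η) ^ γ / (1 - (1 - η) ^ γ) * ‖x p - z‖ ^ γ := by
        rw [mul_div_assoc', div_mul_eq_mul_div]
        gcongr
        exact infDist_nonneg

end Trajectory

section Descent

variable {H : Type*} [NormedAddCommGroup H] [InnerProductSpace ℝ H] [CompleteSpace H]
  {ι : Type*} {V : ι → Submodule ℝ H} [∀ j, CompleteSpace (V j)] [DecidableEq ι]

instance (S : Finset ι) : (⨅ j ∈ S, V j).HasOrthogonalProjection := by
  have hclosed : IsClosed ((⨅ j ∈ S, V j : Submodule ℝ H) : Set H) := by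
    simp only [Submodule.coe_iInf]
    exact isClosed_biInter fun j _ => (completeSpace_coe_iff_isComplete.1 inferInstance).isClosed
  have := hclosed.completeSpace_coe
  infer_instance

theorem IsRelaxedTrajectory.exists_infDist_succ_le {κ η ε β : ℝ} (hreg : LinearlyRegular V κ)
    (hκ : 1 ≤ κ) (hη : 0 ≤ η) (hε : 0 ≤ ε) (hβ0 : 0 ≤ β) (hβ : 1 - η * (2 - η) * ε ^ 2 ≤ β ^ 2)
    {i : ℕ → ι} {lam : ℕ → ℝ} {x : ℕ → H} {a b : ℕ} (htraj : IsRelaxedTrajectory V η i lam x a b)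
    (hab : a < b) {S : Finset ι} (hS : (Ico a b).image i = S) (hκε : κ ^ (#S - 1) * ε ≤ β) :
    ∃ m ∈ Ico a b, infDist (x (m + 1)) (⨅ j ∈ S, V j : Submodule ℝ H) ≤
      β * infDist (x a) (⨅ j ∈ S, V j : Submodule ℝ H) := by
  set D : ℕ → ℝ := fun k => infDist (x k) (⨅ j ∈ S, V j : Submodule ℝ H)
  have hle : ∀ k ∈ Ico a b, (⨅ j ∈ S, V j) ≤ V (i k) := fun k hk =>
    biInf_le V (hS ▸ mem_image_of_mem i hk)
  have hanti : ∀ k, a ≤ k → k ≤ b → D k ≤ D a := fun k hak hkb =>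
    htraj.infDist_le_of_le hη hle le_rfl hak hkb
  by_cases hfar : ∃ k ∈ Ico a b, ε * D k ≤ infDist (x k) (V (i k))
  · obtain ⟨k, hk, hfar⟩ := hfar
    obtain ⟨hlk, hxk⟩ := htraj k hk
    refine ⟨k, hk, ?_⟩
    rw [hxk]
    exact (infDist_relaxProj_le_mul (V (i k)) (hle k hk) hη hε hβ0 hβ hlk hfar).trans
      (mul_le_mul_of_nonneg_left (hanti k (mem_Ico.1 hk).1 (mem_Ico.1 hk).2.le) hβ0)
  push Not at hfar
  have hclose := htraj.infDist_biInf_image_le hreg hκ hη hab (δ := ε * D a) fun k hk =>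
    (hfar k hk).le.trans
      (mul_le_mul_of_nonneg_left (hanti k (mem_Ico.1 hk).1 (mem_Ico.1 hk).2.le) hε)
  rw [hS, ← mul_assoc] at hclose
  refine ⟨b - 1, mem_Ico.2 ⟨by omega, by omega⟩, ?_⟩
  rw [Nat.sub_add_cancel (by omega)]
  exact hclose.trans (mul_le_mul_of_nonneg_right hκε infDist_nonneg)

theorem IsRelaxedTrajectory.exists_card_image_le_infDist_succ_le {κ η ε β : ℝ} {l : ℕ}
    (hreg : LinearlyRegular V κ) (hκ : 1 ≤ κ) (hη : 0 ≤ η) (hε : 0 ≤ ε) (hβ0 : 0 ≤ β)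
    (hβ : 1 - η * (2 - η) * ε ^ 2 ≤ β ^ 2) (hκε : κ ^ l * ε ≤ β) {i : ℕ → ι} {lam : ℕ → ℝ}
    {x : ℕ → H} {p n : ℕ} (htraj : IsRelaxedTrajectory V η i lam x p n) (hpn : p < n)
    (hcard : #((Ico p n).image i) ≤ l + 1) :
    ∃ t ∈ Ico p n, #((Ico p t).image i) ≤ l ∧
      infDist (x (t + 1)) (⨅ j ∈ (Ico p n).image i, V j : Submodule ℝ H) ≤
        β * infDist (x p) (⨅ j ∈ (Ico p n).image i, V j : Submodule ℝ H) := by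
  have hκε' : κ ^ (#((Ico p n).image i) - 1) * ε ≤ β :=
    (mul_le_mul_of_nonneg_right (pow_le_pow_right₀ hκ (by omega)) hε).trans hκε
  classical
  have hex := htraj.exists_infDist_succ_le hreg hκ hη hε hβ0 hβ hpn rfl hκε'
  obtain ⟨htn, htdrop⟩ := Nat.find_spec hex
  refine ⟨Nat.find hex, htn, ?_, htdrop⟩
  -- Otherwise `[p, t)` already visits every control, and the drop would occur before `t`.
  by_contra hlt
  have htn := (mem_Ico.1 htn).2
  have himg : (Ico p (Nat.find hex)).image i = (Ico p n).image i :=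
    eq_of_subset_of_card_le (image_subset_image (Ico_subset_Ico_right htn.le)) (by omega)
  have hpt : p < Nat.find hex := by
    by_contra hle
    rw [Ico_eq_empty_of_le (by omega), image_empty, card_empty] at hlt
    omega
  obtain ⟨s, hs, hsdrop⟩ := (htraj.mono le_rfl htn.le).exists_infDist_succ_le hreg hκ hη hε
    hβ0 hβ hpt himg hκε'
  exact Nat.find_min hex (mem_Ico.1 hs).2 ⟨Ico_subset_Ico_right htn.le hs, hsdrop⟩

theorem StepMomentBound.succ {κ η γ ε β c c' : ℝ} {l : ℕ} (hreg : LinearlyRegular V κ)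
    (hκ : 1 ≤ κ) (hη : η ∈ Set.Ioc 0 1) (hγ : 0 < γ) (hε : 0 ≤ ε) (hβ0 : 0 ≤ β)
    (hβ : 1 - η * (2 - η) * ε ^ 2 ≤ β ^ 2) (hκε : κ ^ l * ε ≤ β) (hc' : 0 ≤ c')
    (hcc' : c + (2 - η) ^ γ + c' * β ^ γ ≤ c') (h : StepMomentBound V η γ l c) :
    StepMomentBound V η γ (l + 1) c' := by
  intro i lam x p n
  induction hlen : n - p using Nat.strong_induction_on generalizing p with
  | _ m ih =>
  intro z hcard htraj hz
  rcases le_or_gt n p with hnp | hpn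
  · rw [Ico_eq_empty_of_le hnp, sum_empty]
    exact mul_nonneg hc' (Real.rpow_nonneg (norm_nonneg _) γ)
  set W : Submodule ℝ H := ⨅ j ∈ (Ico p n).image i, V j
  set D : ℕ → ℝ := fun k => infDist (x k) W
  have hWV : ∀ k ∈ Ico p n, (W : Set H) ⊆ V (i k) := fun k hk =>
    biInf_le V (mem_image_of_mem i hk)
  obtain ⟨t, ht, hcard_block, htdrop⟩ := htraj.exists_card_image_le_infDist_succ_le hreg hκ
    hη.1.le hε hβ0 hβ hκε hpn hcard
  obtain ⟨hpt, htn⟩ := mem_Ico.1 ht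
  have hblock : ∑ k ∈ Ico p t, ‖x (k + 1) - x k‖ ^ γ ≤ c * D p ^ γ := by
    simp only [D, infDist_eq_norm_sub_starProjection]
    exact h i lam x p t _ hcard_block (htraj.mono le_rfl htn.le)
      fun k hk => hWV k (Ico_subset_Ico_right htn.le hk) (W.starProjection_apply_mem _)
  have hstep : ‖x (t + 1) - x t‖ ^ γ ≤ (2 - η) ^ γ * D p ^ γ :=
    htraj.norm_sub_rpow_le_infDist_start hη hγ.le hWV ⟨0, W.zero_mem⟩ ht
  have htail : ∑ k ∈ Ico (t + 1) n, ‖x (k + 1) - x k‖ ^ γ ≤ c' * (β ^ γ * D p ^ γ) := by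
    have := ih (n - (t + 1)) (by omega) (t + 1) rfl (W.starProjection (x (t + 1)))
      ((card_le_card (image_subset_image (Ico_subset_Ico_left (by omega)))).trans hcard)
      (htraj.mono (by omega) le_rfl)
      fun k hk => hWV k (Ico_subset_Ico_left (by omega) hk) (W.starProjection_apply_mem _)
    rw [← infDist_eq_norm_sub_starProjection] at this
    rw [← Real.mul_rpow hβ0 infDist_nonneg]
    exact this.trans (mul_le_mul_of_nonneg_left
      (Real.rpow_le_rpow infDist_nonneg htdrop hγ.le) hc')
  have hDp : D p ≤ ‖x p - z‖ := by
    refine infDist_le_norm_sub ?_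
    simp only [W, iInf_finset_image, SetLike.mem_coe, Submodule.mem_iInf]
    exact hz
  calc ∑ k ∈ Ico p n, ‖x (k + 1) - x k‖ ^ γ
      = ∑ k ∈ Ico p t, ‖x (k + 1) - x k‖ ^ γ + ‖x (t + 1) - x t‖ ^ γ
          + ∑ k ∈ Ico (t + 1) n, ‖x (k + 1) - x k‖ ^ γ := by
        rw [← sum_Ico_succ_top hpt, sum_Ico_consecutive _ (by omega) htn]
    _ ≤ (c + (2 - η) ^ γ + c' * β ^ γ) * D p ^ γ := by
        nlinarith [hblock, hstep, htail]
    _ ≤ c' * ‖x p - z‖ ^ γ :=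
        mul_le_mul hcc' (Real.rpow_le_rpow infDist_nonneg hDp hγ.le)
          (Real.rpow_nonneg infDist_nonneg γ) hc'

theorem stepMomentBound_of_recursion {κ η γ ε β : ℝ} {N : ℕ} (hreg : LinearlyRegular V κ)
    (hκ : 1 ≤ κ) (hη : η ∈ Set.Ioc 0 1) (hγ : 0 < γ) (hε : 0 ≤ ε) (hβ0 : 0 ≤ β) (hβ1 : β < 1)
    (hβ : 1 - η * (2 - η) * ε ^ 2 ≤ β ^ 2) (hκε : ∀ l < N, κ ^ l * ε ≤ β) {C : ℕ → ℝ}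
    (hC1 : C 1 = (2 - η) ^ γ / (1 - (1 - η) ^ γ))
    (hCrec : ∀ l, 1 ≤ l → l < N → C (l + 1) = C l + (C l + (2 - η) ^ γ) / (1 - β ^ γ)) :
    ∀ l, 1 ≤ l → l ≤ N → StepMomentBound V η γ l (C l) := by
  have h2η : 0 ≤ (2 - η) ^ γ := Real.rpow_nonneg (by linarith [hη.2]) γ
  suffices ∀ l, 1 ≤ l → l ≤ N → 0 ≤ C l ∧ StepMomentBound V η γ l (C l) from
    fun l hl hlN => (this l hl hlN).2
  intro l hl
  induction l, hl using Nat.le_induction with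
  | base =>
    intro _
    have hρ := Real.rpow_lt_one (x := 1 - η) (by linarith [hη.2]) (by linarith [hη.1]) hγ
    rw [hC1]
    exact ⟨div_nonneg h2η (by linarith), stepMomentBound_one V hη hγ⟩
  | succ l hl ih =>
    intro hlN
    obtain ⟨hCl, hbound⟩ := ih (by omega)
    obtain ⟨hC', hCC'⟩ := add_add_mul_le_of_eq_add_div hCl h2η (Real.rpow_lt_one hβ0 hβ1 hγ)
      (hCrec l hl (by omega))
    exact ⟨hC', hbound.succ hreg hκ hη hγ hε hβ0 hβ (hκε l (by omega)) hC' hCC'⟩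

end Descent

theorem stmt_3_general {H : Type*} [NormedAddCommGroup H] [InnerProductSpace ℝ H] [CompleteSpace H]
    (N : ℕ) (V : Fin N → Submodule ℝ H) [∀ i, CompleteSpace (V i)]
    (κ : ℝ) (hκ : 2 ≤ κ)
    (hreg : ∀ (I J : Finset (Fin N)) (x : H),
      infDist x ((((⨅ i ∈ I, V i) ⊓ ⨅ j ∈ J, V j) : Submodule ℝ H) : Set H) ≤
        κ * max (infDist x ((⨅ i ∈ I, V i : Submodule ℝ H) : Set H))
                (infDist x ((⨅ j ∈ J, V j : Submodule ℝ H) : Set H)))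
    (η γ : ℝ) (hη : η ∈ Set.Ioc (0 : ℝ) 1) (hγ : 0 < γ)
    (ε β : ℝ) (hε : ε = (1 / 2) * (κ ^ N)⁻¹)
    (hβ : β = Real.sqrt (1 - η * (2 - η) * ε ^ 2))
    (C : ℕ → ℝ) (hC1 : C 1 = (2 - η) ^ γ / (1 - (1 - η) ^ γ))
    (hCrec : ∀ l, 1 ≤ l → l < N →
      C (l + 1) = C l + (C l + (2 - η) ^ γ) / (1 - β ^ γ)) :
    ∀ l, 1 ≤ l → l ≤ N →
      ∀ p q : ℕ, p ≤ q →
      ∀ (i : ℕ → Fin N), ((Finset.Icc p q).image i).card ≤ l →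
      ∀ (lam : ℕ → ℝ), (∀ k, p ≤ k → k ≤ q → lam k ∈ Set.Icc η (2 - η)) →
      ∀ x : ℕ → H, (∀ k, p ≤ k → k ≤ q → x (k + 1) = relaxProj (V (i k)) (lam k) (x k)) →
        ∑ k ∈ Finset.Icc p q, ‖x (k + 1) - x k‖ ^ γ ≤ C l * ‖x p‖ ^ γ := by
  intro l hl hlN p q _ i hcard lam hlam x hx
  have hε0 : 0 < ε := by rw [hε]; positivity
  have hκε : ∀ m < N, κ ^ m * ε ≤ 1 / 4 := fun m hm => hε ▸ pow_mul_half_inv_pow_le hκ hm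
  have hβbounds := sqrt_one_sub_mul_sq_bounds hη ⟨hε0, by simpa using hκε 0 (by omega)⟩
  rw [← hβ] at hβbounds
  obtain ⟨hβsq, hβ4, hβ1⟩ := hβbounds
  have hbound := stepMomentBound_of_recursion hreg (by linarith) hη hγ hε0.le (by linarith) hβ1
    hβsq.ge (fun m hm => (hκε m hm).trans hβ4) hC1 hCrec l hl hlN
  have htraj : IsRelaxedTrajectory V η i lam x p (q + 1) := fun k hk => by
    obtain ⟨hpk, hkq⟩ := mem_Ico.1 hk
    exact ⟨hlam k hpk (by omega), hx k hpk (by omega)⟩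
  simpa [Finset.Ico_add_one_right_eq_Icc] using hbound i lam x p (q + 1) 0
    (by rwa [Finset.Ico_add_one_right_eq_Icc]) htraj fun _ _ => zero_mem _

/-- the induction statement P(ℓ): trajectories whose control sequence takes at
most ℓ distinct values have γ-moments bounded by C_ℓ. -/
theorem stmt_3 {H : Type*} [NormedAddCommGroup H] [InnerProductSpace ℝ H] [CompleteSpace H]
    (N : ℕ) (hN : 1 ≤ N) (V : Fin N → Submodule ℝ H) [∀ i, CompleteSpace (V i)]
    (κ : ℝ) (hκ : 2 ≤ κ)
    (hreg : ∀ (I J : Finset (Fin N)) (x : H),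
      infDist x ((((⨅ i ∈ I, V i) ⊓ ⨅ j ∈ J, V j) : Submodule ℝ H) : Set H) ≤
        κ * max (infDist x ((⨅ i ∈ I, V i : Submodule ℝ H) : Set H))
                (infDist x ((⨅ j ∈ J, V j : Submodule ℝ H) : Set H)))
    (η γ : ℝ) (hη : η ∈ Set.Ioc (0 : ℝ) 1) (hγ : 0 < γ)
    (ε β : ℝ) (hε : ε = (1 / 2) * (κ ^ N)⁻¹)
    (hβ : β = Real.sqrt (1 - η * (2 - η) * ε ^ 2))
    (C : ℕ → ℝ) (hC1 : C 1 = (2 - η) ^ γ / (1 - (1 - η) ^ γ))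
    (hCrec : ∀ l, 1 ≤ l → l < N →
      C (l + 1) = C l + (C l + (2 - η) ^ γ) / (1 - β ^ γ)) :
    ∀ l, 1 ≤ l → l ≤ N →
      ∀ p q : ℕ, p ≤ q →
      ∀ (i : ℕ → Fin N), ((Finset.Icc p q).image i).card ≤ l →
      ∀ (lam : ℕ → ℝ), (∀ k, p ≤ k → k ≤ q → lam k ∈ Set.Icc η (2 - η)) →
      ∀ x : ℕ → H, (∀ k, p ≤ k → k ≤ q → x (k + 1) = relaxProj (V (i k)) (lam k) (x k)) →
        ∑ k ∈ Finset.Icc p q, ‖x (k + 1) - x k‖ ^ γ ≤ C l * ‖x p‖ ^ γ :=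
  stmt_3_general N V κ hκ hreg η γ hη hγ ε β hε hβ C hC1 hCrec
end

section
/- Let V and W be closed subspaces of a real Hilbert space H, let c := sup{ |⟨v,w⟩| : v ∈ V ∩ (V∩W)^⊥, w ∈ W ∩ (V∩W)^⊥, ‖v‖ ≤ 1, ‖w‖ ≤ 1 } (the supremum over the empty set being 0), and assume c < 1. Set κ := 2/√(1−c²). Then for every λ ∈ [0,2] and every x ∈ H, θ_{V∩W}(P_{W,λ}x) ≤ θ_{V∩W}(x) ≤ κ·max(θ_V(x), θ_W(x)). -/
/-!
Write `x = u + y` with `u = P_{V∩W} x` and `y ⊥ V ∩ W`. Since `‖x‖² = ‖u‖² + d(x, V∩W)²`, the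
relative distance `θ_{V∩W}` increases with `d(·, V∩W)` along each fibre of `P_{V∩W}`. The relaxed
projection `P_{W,λ}` fixes `V ∩ W`, commutes with `P_{V∩W}` and is nonexpansive for `λ ∈ [0,2]`,
which gives the first inequality.

For the second, `d(x,V) = d(y,V)`, `d(x,W) = d(y,W)`, and `p = P_V y`, `q = P_W y` lie in
`V ∩ (V∩W)ᗮ` and `W ∩ (V∩W)ᗮ`, so `⟪p, q⟫ ≤ c‖p‖‖q‖`. Then
`‖p‖² + ‖q‖² = ⟪y, p + q⟫ ≤ ‖y‖ ‖p + q‖ ≤ ‖y‖ √((1 + c)(‖p‖² + ‖q‖²))`, hence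
`(1 - c)‖y‖² ≤ d(y,V)² + d(y,W)² ≤ 2 max(d(y,V), d(y,W))²`, and `2/(1 - c) ≤ 4/(1 - c²)`.
-/

open Metric
open scoped RealInnerProductSpace

/-- The relative distance function `θ_V(x) = d(x,V)/‖x‖` (with `θ_V(0) = 0`). -/
noncomputable def relDist {H : Type*} [NormedAddCommGroup H] [InnerProductSpace ℝ H]
    (V : Submodule ℝ H) (x : H) : ℝ :=
  infDist x (V : Set H) / ‖x‖

theorem IsComplete.inter_isClosed {α : Type*} [UniformSpace α] {s t : Set α}
    (hs : IsComplete s) (ht : IsClosed t) : IsComplete (s ∩ t) := by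
  intro f hf hfst
  obtain ⟨x, hxs, hx⟩ := hs f hf (hfst.trans (Filter.principal_mono.2 Set.inter_subset_left))
  have hft : ∀ᶠ y in f, y ∈ t :=
    Filter.le_principal_iff.1 (hfst.trans (Filter.principal_mono.2 Set.inter_subset_right))
  have := hf.1
  exact ⟨x, ⟨hxs, ht.mem_of_tendsto hx hft⟩, hx⟩

instance Submodule.completeSpace_inf {R E : Type*} [Semiring R] [AddCommMonoid E] [Module R E]
    [UniformSpace E] [T0Space E] (V W : Submodule R E) [CompleteSpace V] [CompleteSpace W] :
    CompleteSpace ↥(V ⊓ W) := by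
  have hV := completeSpace_coe_iff_isComplete (s := (V : Set E)) |>.1 ‹_›
  have hW := completeSpace_coe_iff_isComplete (s := (W : Set E)) |>.1 ‹_›
  exact completeSpace_coe_iff_isComplete (s := ((V ⊓ W : Submodule R E) : Set E)) |>.2 <|
    hV.inter_isClosed hW.isClosed

namespace Submodule

variable {𝕜 E : Type*} [RCLike 𝕜] [NormedAddCommGroup E] [InnerProductSpace 𝕜 E]

theorem infDist_eq_norm_sub_starProjection (K : Submodule 𝕜 E) [K.HasOrthogonalProjection]
    (x : E) : infDist x K = ‖x - K.starProjection x‖ := by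
  rw [starProjection_minimal, infDist_eq_iInf]
  simp only [dist_eq_norm]
  rfl

theorem norm_sq_eq_norm_sq_starProjection_add (K : Submodule 𝕜 E) [K.HasOrthogonalProjection]
    (x : E) : ‖x‖ ^ 2 = ‖K.starProjection x‖ ^ 2 + ‖x - K.starProjection x‖ ^ 2 := by
  simpa using K.norm_sq_eq_add_norm_sq_starProjection x

theorem starProjection_mem_orthogonal_of_le {U V : Submodule 𝕜 E} [V.HasOrthogonalProjection]
    (h : U ≤ V) {y : E} (hy : y ∈ Uᗮ) : V.starProjection y ∈ Uᗮ := by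
  rw [← sub_sub_cancel y (V.starProjection y)]
  exact sub_mem hy (orthogonal_le h (sub_starProjection_mem_orthogonal y))

theorem sub_starProjection_sub_starProjection_of_le {U V : Submodule 𝕜 E}
    [U.HasOrthogonalProjection] [V.HasOrthogonalProjection] (h : U ≤ V) (x : E) :
    x - U.starProjection x - V.starProjection (x - U.starProjection x) =
      x - V.starProjection x := by
  rw [map_sub, starProjection_eq_self_iff.2 (h (U.starProjection_apply_mem x))]
  abel

end Submodule

section RelativeDistance

variable {H : Type*} [NormedAddCommGroup H] [InnerProductSpace ℝ H]

theorem relDist_le_relDist_of_starProjection_eq {U : Submodule ℝ H} [U.HasOrthogonalProjection]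
    {x x' : H} (hP : U.starProjection x' = U.starProjection x)
    (hd : ‖x' - U.starProjection x'‖ ≤ ‖x - U.starProjection x‖) :
    relDist U x' ≤ relDist U x := by
  have hx' := U.norm_sq_eq_norm_sq_starProjection_add x'
  have hx := U.norm_sq_eq_norm_sq_starProjection_add x
  rw [hP] at hx' hd
  simp only [relDist, U.infDist_eq_norm_sub_starProjection, hP]
  rcases (norm_nonneg x').eq_or_lt with h0 | hpos
  · rw [← h0, div_zero]
    positivity
  have hd0 := norm_nonneg (x' - U.starProjection x)
  have hxpos : 0 < ‖x‖ := by nlinarith [norm_nonneg x]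
  rw [div_le_div_iff₀ hpos hxpos,
    ← pow_le_pow_iff_left₀ (by positivity) (by positivity) two_ne_zero, mul_pow, mul_pow, hx, hx']
  nlinarith [mul_nonneg (sub_nonneg.2 (pow_le_pow_left₀ hd0 hd 2)) (sq_nonneg ‖U.starProjection x‖)]

end RelativeDistance

section RelaxedProjection

variable {H : Type*} [NormedAddCommGroup H] [InnerProductSpace ℝ H]
  (W : Submodule ℝ H) [W.HasOrthogonalProjection] (l : ℝ)

theorem relaxProj_def (x : H) : relaxProj W l x = (1 - l) • x + l • W.starProjection x := rfl

theorem relaxProj_sub (x y : H) : relaxProj W l (x - y) = relaxProj W l x - relaxProj W l y := by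
  simp only [relaxProj_def, map_sub]
  module

theorem relaxProj_of_mem {x : H} (hx : x ∈ W) : relaxProj W l x = x := by
  rw [relaxProj_def, W.starProjection_eq_self_iff.2 hx]
  module

theorem norm_relaxProj_le (hl : l ∈ Set.Icc (0 : ℝ) 2) (x : H) : ‖relaxProj W l x‖ ≤ ‖x‖ := by
  set p := W.starProjection x
  have hsplit : relaxProj W l x = p + (1 - l) • (x - p) := by
    rw [relaxProj_def]
    module
  have horth : ⟪p, (1 - l) • (x - p)⟫ = 0 := by
    rw [real_inner_smul_right, real_inner_comm, W.starProjection_inner_eq_zero x p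
      (W.starProjection_apply_mem x), mul_zero]
  have hl1 : (1 - l) ^ 2 ≤ 1 := by nlinarith [hl.1, hl.2]
  rw [← pow_le_pow_iff_left₀ (norm_nonneg _) (norm_nonneg _) two_ne_zero, hsplit,
    norm_add_sq_real, horth, norm_smul, mul_pow, Real.norm_eq_abs, sq_abs,
    W.norm_sq_eq_norm_sq_starProjection_add x]
  nlinarith [sq_nonneg ‖x - p‖]

theorem starProjection_relaxProj_of_le {U : Submodule ℝ H} [U.HasOrthogonalProjection]
    (h : U ≤ W) (x : H) : U.starProjection (relaxProj W l x) = U.starProjection x := by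
  rw [relaxProj_def, map_add, map_smul, map_smul,
    ← ContinuousLinearMap.comp_apply, Submodule.starProjection_comp_starProjection_of_le h]
  module

theorem relDist_relaxProj_le_of_le {U : Submodule ℝ H} [U.HasOrthogonalProjection] (h : U ≤ W)
    (hl : l ∈ Set.Icc (0 : ℝ) 2) (x : H) : relDist U (relaxProj W l x) ≤ relDist U x := by
  refine relDist_le_relDist_of_starProjection_eq (starProjection_relaxProj_of_le W l h x) ?_
  have hfix : relaxProj W l (U.starProjection x) = U.starProjection x :=
    relaxProj_of_mem W l (h (U.starProjection_apply_mem x))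
  rw [starProjection_relaxProj_of_le W l h x, ← hfix, ← relaxProj_sub, hfix]
  exact norm_relaxProj_le W l hl _

end RelaxedProjection

section FriedrichsAngle

variable {H : Type*} [NormedAddCommGroup H] [InnerProductSpace ℝ H]

noncomputable def dixmierCos (A B : Submodule ℝ H) : ℝ :=
  sSup {r : ℝ | ∃ v w : H, v ∈ A ∧ w ∈ B ∧ ‖v‖ ≤ 1 ∧ ‖w‖ ≤ 1 ∧ r = |⟪v, w⟫|}

noncomputable def friedrichsCos (V W : Submodule ℝ H) : ℝ :=
  dixmierCos (V ⊓ (V ⊓ W)ᗮ) (W ⊓ (V ⊓ W)ᗮ)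

variable {A B : Submodule ℝ H}

theorem abs_inner_le_dixmierCos {v w : H} (hv : v ∈ A) (hw : w ∈ B) (hv1 : ‖v‖ ≤ 1)
    (hw1 : ‖w‖ ≤ 1) : |⟪v, w⟫| ≤ dixmierCos A B := by
  refine le_csSup ⟨1, ?_⟩ ⟨v, w, hv, hw, hv1, hw1, rfl⟩
  rintro r ⟨v, w, -, -, hv1, hw1, rfl⟩
  exact (abs_real_inner_le_norm v w).trans (mul_le_one₀ hv1 (norm_nonneg w) hw1)

theorem dixmierCos_nonneg : 0 ≤ dixmierCos A B := by
  simpa using abs_inner_le_dixmierCos A.zero_mem B.zero_mem (by simp) (by simp)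

theorem abs_inner_le_dixmierCos_mul {v w : H} (hv : v ∈ A) (hw : w ∈ B) :
    |⟪v, w⟫| ≤ dixmierCos A B * ‖v‖ * ‖w‖ := by
  rcases eq_or_ne v 0 with rfl | hv0
  · simp
  rcases eq_or_ne w 0 with rfl | hw0
  · simp
  have h := abs_inner_le_dixmierCos (A.smul_mem ‖v‖⁻¹ hv) (B.smul_mem ‖w‖⁻¹ hw)
    (norm_smul_inv_norm hv0).le (norm_smul_inv_norm hw0).le
  rw [real_inner_smul_left, real_inner_smul_right, abs_mul, abs_mul, abs_inv, abs_inv, abs_norm,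
    abs_norm, ← mul_assoc, ← mul_inv, inv_mul_le_iff₀ (by positivity)] at h
  linarith

theorem friedrichsCos_nonneg (V W : Submodule ℝ H) : 0 ≤ friedrichsCos V W := dixmierCos_nonneg

theorem one_sub_mul_norm_sq_le_of_inner_starProjection_le (V W : Submodule ℝ H)
    [V.HasOrthogonalProjection] [W.HasOrthogonalProjection] {c : ℝ} (hc : 0 ≤ c) (x : H)
    (h : ⟪V.starProjection x, W.starProjection x⟫ ≤
      c * ‖V.starProjection x‖ * ‖W.starProjection x‖) :
    (1 - c) * ‖x‖ ^ 2 ≤ ‖x - V.starProjection x‖ ^ 2 + ‖x - W.starProjection x‖ ^ 2 := by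
  set p := V.starProjection x
  set q := W.starProjection x
  have hxp : ⟪x, p⟫ = ‖p‖ ^ 2 := by
    have := V.starProjection_inner_eq_zero x p (V.starProjection_apply_mem x)
    rw [inner_sub_left, real_inner_self_eq_norm_sq] at this
    linarith
  have hxq : ⟪x, q⟫ = ‖q‖ ^ 2 := by
    have := W.starProjection_inner_eq_zero x q (W.starProjection_apply_mem x)
    rw [inner_sub_left, real_inner_self_eq_norm_sq] at this
    linarith
  set S := ‖p‖ ^ 2 + ‖q‖ ^ 2
  have hS : S ≤ ‖x‖ * ‖p + q‖ := by
    rw [show S = ⟪x, p + q⟫ by rw [inner_add_right, hxp, hxq]]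
    exact real_inner_le_norm x (p + q)
  have hpq : ‖p + q‖ ^ 2 ≤ (1 + c) * S := by
    rw [norm_add_sq_real]
    nlinarith [sq_nonneg (‖p‖ - ‖q‖), mul_nonneg (mul_nonneg hc (norm_nonneg p)) (norm_nonneg q)]
  have hS2 : S ^ 2 ≤ ((1 + c) * ‖x‖ ^ 2) * S :=
    calc S ^ 2 ≤ (‖x‖ * ‖p + q‖) ^ 2 := pow_le_pow_left₀ (by positivity) hS 2
      _ = ‖x‖ ^ 2 * ‖p + q‖ ^ 2 := mul_pow _ _ _
      _ ≤ ‖x‖ ^ 2 * ((1 + c) * S) := mul_le_mul_of_nonneg_left hpq (sq_nonneg _)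
      _ = ((1 + c) * ‖x‖ ^ 2) * S := by ring
  have hSx : S ≤ (1 + c) * ‖x‖ ^ 2 := by
    by_contra! hlt
    have hk : 0 ≤ (1 + c) * ‖x‖ ^ 2 := by positivity
    nlinarith [mul_lt_mul_of_pos_left hlt (hk.trans_lt hlt)]
  have hdp := V.norm_sq_eq_norm_sq_starProjection_add x
  have hdq := W.norm_sq_eq_norm_sq_starProjection_add x
  linarith

theorem one_sub_friedrichsCos_mul_norm_sq_le (V W : Submodule ℝ H)
    [V.HasOrthogonalProjection] [W.HasOrthogonalProjection] {y : H} (hy : y ∈ (V ⊓ W)ᗮ) :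
    (1 - friedrichsCos V W) * ‖y‖ ^ 2 ≤
      ‖y - V.starProjection y‖ ^ 2 + ‖y - W.starProjection y‖ ^ 2 :=
  one_sub_mul_norm_sq_le_of_inner_starProjection_le V W (friedrichsCos_nonneg V W) y <|
    le_of_abs_le <| abs_inner_le_dixmierCos_mul
      ⟨V.starProjection_apply_mem y, Submodule.starProjection_mem_orthogonal_of_le inf_le_left hy⟩
      ⟨W.starProjection_apply_mem y, Submodule.starProjection_mem_orthogonal_of_le inf_le_right hy⟩

end FriedrichsAngle

theorem le_two_div_sqrt_mul_max {a b c t : ℝ} (ha : 0 ≤ a) (hb : 0 ≤ b) (hc0 : 0 ≤ c) (hc1 : c < 1)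
    (ht : 0 ≤ t) (h : (1 - c) * t ^ 2 ≤ a ^ 2 + b ^ 2) :
    t ≤ 2 / √(1 - c ^ 2) * max a b := by
  have hc2 : 0 < 1 - c ^ 2 := by nlinarith
  have hm : a ^ 2 + b ^ 2 ≤ 2 * max a b ^ 2 := by
    nlinarith [pow_le_pow_left₀ ha (le_max_left a b) 2, pow_le_pow_left₀ hb (le_max_right a b) 2]
  rw [← pow_le_pow_iff_left₀ ht (by positivity) two_ne_zero, mul_pow, div_pow,
    Real.sq_sqrt hc2.le, div_mul_eq_mul_div, le_div_iff₀ hc2]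
  nlinarith

theorem infDist_inf_le_two_div_sqrt_mul_max {H : Type*} [NormedAddCommGroup H]
    [InnerProductSpace ℝ H] (V W : Submodule ℝ H) [CompleteSpace V] [CompleteSpace W]
    (hc : friedrichsCos V W < 1) (x : H) :
    infDist x (V ⊓ W : Submodule ℝ H) ≤
      2 / √(1 - friedrichsCos V W ^ 2) * max (infDist x V) (infDist x W) := by
  simp only [Submodule.infDist_eq_norm_sub_starProjection]
  rw [← Submodule.sub_starProjection_sub_starProjection_of_le (U := V ⊓ W) inf_le_left x,
    ← Submodule.sub_starProjection_sub_starProjection_of_le (U := V ⊓ W) inf_le_right x]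
  exact le_two_div_sqrt_mul_max (norm_nonneg _) (norm_nonneg _) (friedrichsCos_nonneg V W) hc
    (norm_nonneg _)
    (one_sub_friedrichsCos_mul_norm_sq_le V W (Submodule.sub_starProjection_mem_orthogonal x))

theorem stmt_12_general {H : Type*} [NormedAddCommGroup H] [InnerProductSpace ℝ H]
    (V W : Submodule ℝ H) [CompleteSpace V] [CompleteSpace W]
    (c : ℝ)
    (hc : c = sSup {r : ℝ | ∃ v w : H, v ∈ V ⊓ (V ⊓ W)ᗮ ∧ w ∈ W ⊓ (V ⊓ W)ᗮ ∧
      ‖v‖ ≤ 1 ∧ ‖w‖ ≤ 1 ∧ r = |⟪v, w⟫|})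
    (hc1 : c < 1) (κ : ℝ) (hκ : κ = 2 / Real.sqrt (1 - c ^ 2))
    (l : ℝ) (hl : l ∈ Set.Icc (0 : ℝ) 2) (x : H) :
    relDist (V ⊓ W) (relaxProj W l x) ≤ relDist (V ⊓ W) x ∧
    relDist (V ⊓ W) x ≤ κ * max (relDist V x) (relDist W x) := by
  have hcF : c = friedrichsCos V W := hc
  subst hcF hκ
  refine ⟨relDist_relaxProj_le_of_le W l inf_le_right hl x, ?_⟩
  simp only [relDist]
  rw [max_div_div_right (norm_nonneg x), ← mul_div_assoc]
  exact div_le_div_of_nonneg_right (infDist_inf_le_two_div_sqrt_mul_max V W hc1 x) (norm_nonneg x)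

/-- `θ_{V∩W}(P_{W,λ}x) ≤ θ_{V∩W}(x) ≤ κ·max(θ_V(x), θ_W(x))` with
`κ = 2/√(1−c²)`, `c = cos φ(V,W)`. -/
theorem stmt_12 {H : Type*} [NormedAddCommGroup H] [InnerProductSpace ℝ H] [CompleteSpace H]
    (V W : Submodule ℝ H) [CompleteSpace V] [CompleteSpace W]
    (c : ℝ)
    (hc : c = sSup {r : ℝ | ∃ v w : H, v ∈ V ⊓ (V ⊓ W)ᗮ ∧ w ∈ W ⊓ (V ⊓ W)ᗮ ∧
      ‖v‖ ≤ 1 ∧ ‖w‖ ≤ 1 ∧ r = |⟪v, w⟫|})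
    (hc1 : c < 1) (κ : ℝ) (hκ : κ = 2 / Real.sqrt (1 - c ^ 2))
    (l : ℝ) (hl : l ∈ Set.Icc (0 : ℝ) 2) (x : H) :
    relDist (V ⊓ W) (relaxProj W l x) ≤ relDist (V ⊓ W) x ∧
    relDist (V ⊓ W) x ≤ κ * max (relDist V x) (relDist W x) :=
  stmt_12_general V W c hc hc1 κ hκ l hl x
end
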